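/- Let d ≥ 2, f : ℝ^d → ℝ, M ⊆ ℝ^d, let k, p, m be positive integers and v ∈ S^{d−1}. Let A' be the set of all x ∈ M such that (i) |f(y)−f(x)|/‖y−x‖ < k whenever y ∈ M, 0 < ‖y−x‖ < 1/p and ‖(y−x)/‖y−x‖ − v‖ < 1/m, and (ii) f is not Lipschitz at x relative to M. Then A' is porous, i.e., porous at each of its points. -/
import Mathlib


open Metric MeasureTheory Filter Set

noncomputable section

variable {d : ℕ}

/-- `f` is Lipschitz at `x` relative to `M`: either `x` is not a limit point of `M`, or
`limsup_{y→x, y∈M} |f(y)−f(x)|/‖y−x‖ < ∞`. -/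
def LipAtRel (f : EuclideanSpace ℝ (Fin d) → ℝ) (x : EuclideanSpace ℝ (Fin d))
    (M : Set (EuclideanSpace ℝ (Fin d))) : Prop :=
  x ∉ closure (M \ {x}) ∨
  Filter.IsBoundedUnder (· ≤ ·) (nhdsWithin x (M \ {x}))
    (fun y : EuclideanSpace ℝ (Fin d) => |f y - f x| / ‖y - x‖)

/-- `A` is porous at `x`. -/
def IsPorousAt (A : Set (EuclideanSpace ℝ (Fin d))) (x : EuclideanSpace ℝ (Fin d)) : Prop :=
  ∃ q : ℝ, 0 < q ∧ q < 1 ∧ ∀ ε > 0, ∃ y : EuclideanSpace ℝ (Fin d),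
    y ∈ Metric.ball x ε ∧ y ≠ x ∧ Metric.ball y (q * ‖x - y‖) ∩ A = ∅

/-- `A` is porous: porous at each of its points. -/
def IsPorousSet (A : Set (EuclideanSpace ℝ (Fin d))) : Prop := ∀ x ∈ A, IsPorousAt A x

lemma dir_est {E : Type*} [NormedAddCommGroup E] [NormedSpace ℝ E]
    (u v : E) (hv : ‖v‖ = 1) (s : ℝ) (hs : 0 ≤ s) :
    ‖‖u‖⁻¹ • u - v‖ * ‖u‖ ≤ 2 * ‖u - s • v‖ := by
  rcases eq_or_ne u 0 with rfl | hu
  · simp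
  · have h0 : (0:ℝ) < ‖u‖ := norm_pos_iff.mpr hu
    have e : ‖u‖ • (‖u‖⁻¹ • u - v) = u - ‖u‖ • v := by
      rw [smul_sub, smul_inv_smul₀ h0.ne']
    have e2 : ‖‖u‖⁻¹ • u - v‖ * ‖u‖ = ‖u - ‖u‖ • v‖ := by
      rw [← e, norm_smul, Real.norm_of_nonneg h0.le, mul_comm]
    rw [e2]
    have t1 : ‖u - ‖u‖ • v‖ ≤ ‖u - s • v‖ + ‖s • v - ‖u‖ • v‖ := by
      have := norm_sub_le_norm_sub_add_norm_sub u (s • v) (‖u‖ • v)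
      linarith
    have t2 : ‖s • v - ‖u‖ • v‖ = |s - ‖u‖| := by
      rw [← sub_smul, norm_smul, hv, mul_one, Real.norm_eq_abs]
    have t3 : |s - ‖u‖| ≤ ‖u - s • v‖ := by
      have h := abs_norm_sub_norm_le (s • v) u
      rw [norm_smul, hv, mul_one, Real.norm_of_nonneg hs] at h
      rw [norm_sub_rev] at h
      exact h
    linarith

set_option maxHeartbeats 1000000 in
/-- For positive integers `k, p, m` and a unit vector `v`, the set of points `x ∈ M`
satisfying the uniform directional Lipschitz estimate with constant `k`, scale `1/p` and
angular tolerance `1/m` around `v`, at which `f` is not Lipschitz relative to `M`, is porous. -/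
theorem stmt5 (d : ℕ) (hd : 2 ≤ d) (f : EuclideanSpace ℝ (Fin d) → ℝ)
    (M : Set (EuclideanSpace ℝ (Fin d))) (k p m : ℕ) (hk : 0 < k) (hp : 0 < p) (hm : 0 < m)
    (v : EuclideanSpace ℝ (Fin d)) (hv : v ∈ Metric.sphere (0 : EuclideanSpace ℝ (Fin d)) 1) :
    IsPorousSet {x : EuclideanSpace ℝ (Fin d) | x ∈ M ∧
      (∀ y ∈ M, 0 < ‖y - x‖ → ‖y - x‖ < 1 / (p : ℝ) →
        ‖‖y - x‖⁻¹ • (y - x) - v‖ < 1 / (m : ℝ) → |f y - f x| / ‖y - x‖ < (k : ℝ)) ∧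
      ¬ LipAtRel f x M} := by
  intro x hx
  obtain ⟨hxM, hcond, hnl⟩ := hx
  have hv1 : ‖v‖ = 1 := by simpa using hv
  have hm0 : (0:ℝ) < (m:ℝ) := by exact_mod_cast hm
  have hm1 : (1:ℝ) ≤ (m:ℝ) := by exact_mod_cast hm
  have hp0 : (0:ℝ) < (p:ℝ) := by exact_mod_cast hp
  have hk1 : (1:ℝ) ≤ (k:ℝ) := by exact_mod_cast hk
  rw [LipAtRel] at hnl
  push_neg at hnl
  obtain ⟨hcl, hnb⟩ := hnl
  have hfreq : ∀ C : ℝ, ∃ᶠ y in nhdsWithin x (M \ {x}), C < |f y - f x| / ‖y - x‖ := by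
    intro C
    by_contra h
    rw [Filter.not_frequently] at h
    refine hnb ⟨C, ?_⟩
    rw [Filter.eventually_map]
    filter_upwards [h] with y hy
    exact not_lt.mp hy
  refine ⟨1/(4*(m:ℝ)), by positivity, ?_, ?_⟩
  · rw [div_lt_one (by positivity)]
    linarith
  intro ε hε
  set δ : ℝ := min (ε/(16*(m:ℝ))) (1/(21*(m:ℝ)*(p:ℝ))) with hδdef
  have hδ : 0 < δ := lt_min (by positivity) (by positivity)
  have hball : ∀ᶠ y' in nhdsWithin x (M \ {x}), y' ∈ Metric.ball x δ :=
    nhdsWithin_le_nhds (Metric.ball_mem_nhds x hδ)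
  obtain ⟨y, ⟨hCy, hyb⟩, hyM, hyx⟩ :=
    (((hfreq (41*(k:ℝ)*(m:ℝ))).and_eventually hball).and_eventually self_mem_nhdsWithin).exists
  have hyx' : y ≠ x := fun h => hyx (by simp [h])
  set r : ℝ := ‖y - x‖ with hrdef
  have hr0 : 0 < r := norm_pos_iff.mpr (sub_ne_zero.mpr hyx')
  have hrδ : r < δ := by
    have := Metric.mem_ball.mp hyb
    rwa [dist_eq_norm] at this
  have hrε : 16*(m:ℝ)*r < ε := by
    have h1 : r < ε/(16*(m:ℝ)) := lt_of_lt_of_le hrδ (min_le_left _ _)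
    have := (lt_div_iff₀ (by positivity : (0:ℝ) < 16*(m:ℝ))).mp h1
    linarith
  have hrp : 21*(m:ℝ)*r < 1/(p:ℝ) := by
    have h1 : r < 1/(21*(m:ℝ)*(p:ℝ)) := lt_of_lt_of_le hrδ (min_le_right _ _)
    rw [lt_div_iff₀ hp0]
    have := (lt_div_iff₀ (by positivity : (0:ℝ) < 21*(m:ℝ)*(p:ℝ))).mp h1
    nlinarith
  set t : ℝ := 16*(m:ℝ)*r with htdef
  have ht0 : 0 < t := by positivity
  set z := x - t • v with hzdef
  have hntv : ‖t • v‖ = t := by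
    rw [norm_smul, hv1, mul_one, Real.norm_of_nonneg ht0.le]
  have hxz : ‖x - z‖ = t := by
    rw [hzdef]
    simp [hntv]
  refine ⟨z, ?_, ?_, ?_⟩
  · rw [Metric.mem_ball, dist_eq_norm, norm_sub_rev, hxz]
    exact hrε
  · intro hzx
    rw [hzdef] at hzx
    have : t • v = 0 := sub_eq_self.mp hzx
    have : t = 0 ∨ v = 0 := smul_eq_zero.mp this
    rcases this with h | h
    · exact ht0.ne' h
    · rw [h] at hv1; simp at hv1
  rw [Set.eq_empty_iff_forall_notMem]
  rintro w ⟨hwb, hwM, hwcond, -⟩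
  have hwz : ‖w - z‖ < 4*r := by
    have := Metric.mem_ball.mp hwb
    rw [dist_eq_norm, hxz] at this
    calc ‖w - z‖ < 1/(4*(m:ℝ)) * t := this
      _ = 4*r := by rw [htdef]; field_simp; ring
  -- estimates for u1 = x - w
  have h1 : ‖(x - w) - t • v‖ < 4*r := by
    have e : (x - w) - t • v = -(w - z) := by rw [hzdef]; abel
    rw [e, norm_neg]; exact hwz
  have ha1 : |‖x - w‖ - t| ≤ ‖(x - w) - t • v‖ := by
    have h := abs_norm_sub_norm_le (x - w) (t • v)
    rwa [hntv] at h
  have hl1 : t - 4*r < ‖x - w‖ := by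
    have := abs_lt.mp (lt_of_le_of_lt ha1 h1)
    linarith [this.1]
  have hu1 : ‖x - w‖ < t + 4*r := by
    have := abs_lt.mp (lt_of_le_of_lt ha1 h1)
    linarith [this.2]
  -- estimates for u2 = y - w
  have h2 : ‖(y - w) - t • v‖ < 5*r := by
    have e : (y - w) - t • v = (y - x) + -(w - z) := by rw [hzdef]; abel
    calc ‖(y - w) - t • v‖ = ‖(y - x) + -(w - z)‖ := by rw [e]
      _ ≤ ‖y - x‖ + ‖-(w - z)‖ := norm_add_le _ _
      _ = r + ‖w - z‖ := by rw [norm_neg]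
      _ < 5*r := by linarith
  have ha2 : |‖y - w‖ - t| ≤ ‖(y - w) - t • v‖ := by
    have h := abs_norm_sub_norm_le (y - w) (t • v)
    rwa [hntv] at h
  have hl2 : t - 5*r < ‖y - w‖ := by
    have := abs_lt.mp (lt_of_le_of_lt ha2 h2)
    linarith [this.1]
  have hu2 : ‖y - w‖ < t + 5*r := by
    have := abs_lt.mp (lt_of_le_of_lt ha2 h2)
    linarith [this.2]
  have hmr : r ≤ (m:ℝ)*r := by nlinarith
  have hmr0 : 0 < (m:ℝ)*r := mul_pos hm0 hr0
  have hn1pos : 0 < ‖x - w‖ := by rw [htdef] at hl1; linarith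
  have hn2pos : 0 < ‖y - w‖ := by rw [htdef] at hl2; linarith
  -- direction estimates
  have hd1 : ‖‖x - w‖⁻¹ • (x - w) - v‖ * ‖x - w‖ ≤ 2 * ‖(x - w) - t • v‖ :=
    dir_est (x - w) v hv1 t ht0.le
  have hdir1 : ‖‖x - w‖⁻¹ • (x - w) - v‖ < 1/(m:ℝ) := by
    set D := ‖‖x - w‖⁻¹ • (x - w) - v‖ with hD
    have hD0 : 0 ≤ D := norm_nonneg _
    have step : D * ((16*(m:ℝ) - 4)*r) < 8*r := by
      have hle : (16*(m:ℝ) - 4)*r ≤ ‖x - w‖ := by rw [htdef] at hl1; linarith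
      calc D * ((16*(m:ℝ) - 4)*r) ≤ D * ‖x - w‖ := by
            exact mul_le_mul_of_nonneg_left hle hD0
        _ ≤ 2 * ‖(x - w) - t • v‖ := hd1
        _ < 8*r := by linarith
    have hpos : (0:ℝ) < (16*(m:ℝ) - 4)*r := by nlinarith [hmr, hr0]
    have hD2 : D < 8*r / ((16*(m:ℝ) - 4)*r) := (lt_div_iff₀ hpos).mpr step
    have : 8*r / ((16*(m:ℝ) - 4)*r) < 1/(m:ℝ) := by
      rw [div_lt_div_iff₀ hpos hm0]
      nlinarith [hmr, hmr0]
    linarith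
  have hd2 : ‖‖y - w‖⁻¹ • (y - w) - v‖ * ‖y - w‖ ≤ 2 * ‖(y - w) - t • v‖ :=
    dir_est (y - w) v hv1 t ht0.le
  have hdir2 : ‖‖y - w‖⁻¹ • (y - w) - v‖ < 1/(m:ℝ) := by
    set D := ‖‖y - w‖⁻¹ • (y - w) - v‖ with hD
    have hD0 : 0 ≤ D := norm_nonneg _
    have step : D * ((16*(m:ℝ) - 5)*r) < 10*r := by
      have hle : (16*(m:ℝ) - 5)*r ≤ ‖y - w‖ := by rw [htdef] at hl2; linarith
      calc D * ((16*(m:ℝ) - 5)*r) ≤ D * ‖y - w‖ := by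
            exact mul_le_mul_of_nonneg_left hle hD0
        _ ≤ 2 * ‖(y - w) - t • v‖ := hd2
        _ < 10*r := by linarith
    have hpos : (0:ℝ) < (16*(m:ℝ) - 5)*r := by nlinarith [hmr, hr0]
    have hD2 : D < 10*r / ((16*(m:ℝ) - 5)*r) := (lt_div_iff₀ hpos).mpr step
    have : 10*r / ((16*(m:ℝ) - 5)*r) < 1/(m:ℝ) := by
      rw [div_lt_div_iff₀ hpos hm0]
      nlinarith [hmr, hmr0]
    linarith
  -- size bounds
  have hs1 : ‖x - w‖ < 1/(p:ℝ) := by rw [htdef] at hu1; nlinarith [hmr, hmr0, hrp]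
  have hs2 : ‖y - w‖ < 1/(p:ℝ) := by rw [htdef] at hu2; nlinarith [hmr, hmr0, hrp]
  have q1 : |f x - f w| / ‖x - w‖ < (k:ℝ) := hwcond x hxM hn1pos hs1 hdir1
  have q2 : |f y - f w| / ‖y - w‖ < (k:ℝ) := hwcond y hyM hn2pos hs2 hdir2
  have q1' : |f x - f w| < (k:ℝ) * ‖x - w‖ := by
    have := (div_lt_iff₀ hn1pos).mp q1; linarith
  have q2' : |f y - f w| < (k:ℝ) * ‖y - w‖ := by
    have := (div_lt_iff₀ hn2pos).mp q2; linarith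
  have htri : |f y - f x| ≤ |f y - f w| + |f x - f w| := by
    have := abs_sub_le (f y) (f w) (f x)
    rw [abs_sub_comm (f w) (f x)] at this
    linarith
  have hbig : 41*(k:ℝ)*(m:ℝ) * r < |f y - f x| := (lt_div_iff₀ hr0).mp hCy
  have hk0 : (0:ℝ) ≤ (k:ℝ) := by linarith
  have h20 : ‖x - w‖ ≤ 20*((m:ℝ)*r) := by rw [htdef] at hu1; linarith only [hu1, hmr]
  have h21 : ‖y - w‖ ≤ 21*((m:ℝ)*r) := by rw [htdef] at hu2; linarith only [hu2, hmr]
  have hb1 : (k:ℝ) * ‖x - w‖ ≤ (k:ℝ) * (20*((m:ℝ)*r)) := mul_le_mul_of_nonneg_left h20 hk0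
  have hb2 : (k:ℝ) * ‖y - w‖ ≤ (k:ℝ) * (21*((m:ℝ)*r)) := mul_le_mul_of_nonneg_left h21 hk0
  linarith only [hb1, hb2, q1', q2', htri, hbig, hmr0, hk0]
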